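/- Let m > -1/2 and let f be a concave-convex solution of the boundary value problem on [0,∞) (f''' + (m+2)ff'' - (2m+1)(f')² = 0, f(0) = -γ, f''(0) = -1, f'(∞) = 0), with f''(t₀) = 0, f'' < 0 on [0,t₀), f'' > 0 on (t₀,∞), and f bounded with f > 0, f' < 0, on [t₀,∞). Then for all t ≥ t₀: -(m+2)/2 < f'(t)/f(t)² < 0 and 0 ≤ f''(t)/f(t)³ < -(m+2)·f'(t)/f(t)². -/

import Mathlib

/-!
Put `g = f'' + (m+2) f f'` and `H = f' + (m+2)/2 f²`. The equation gives `g' = 3(m+1) f'²`,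
so `g` increases strictly where `f' < 0`; since `f f' → 0`, a nonnegative value of `g` on
`[t₀, ∞)` would force `f''` to stay above a positive constant, contradicting `f' → 0`.
Hence `g < 0` there, i.e. `f''/f³ < -(m+2) f'/f²`. Next `H' = g < 0`, so `H` decreases strictly,
and `f' ≤ H` with `f' → 0` gives `H > 0`, i.e. `-(m+2)/2 < f'/f²`.
-/

open Filter Set Topology

lemma strictMonoOn_Ici_of_hasDerivAt_pos {g g' : ℝ → ℝ} {a : ℝ}
    (hg : ∀ t ≥ a, HasDerivAt g (g' t) t) (hpos : ∀ t > a, 0 < g' t) :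
    StrictMonoOn g (Ici a) := by
  refine strictMonoOn_of_hasDerivWithinAt_pos (f' := g') (convex_Ici a)
    (fun t ht => (hg t ht).continuousAt.continuousWithinAt) (fun t ht => ?_) (fun t ht => ?_)
  · rw [interior_Ici] at ht ⊢
    exact (hg t ht.le).hasDerivWithinAt
  · rw [interior_Ici] at ht
    exact hpos t ht

lemma strictAntiOn_Ici_of_hasDerivAt_neg {g g' : ℝ → ℝ} {a : ℝ}
    (hg : ∀ t ≥ a, HasDerivAt g (g' t) t) (hneg : ∀ t > a, g' t < 0) :
    StrictAntiOn g (Ici a) := by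
  have := strictMonoOn_Ici_of_hasDerivAt_pos (fun t ht => (hg t ht).neg)
    (fun t ht => neg_pos.mpr (hneg t ht))
  exact fun x hx y hy hxy => neg_lt_neg_iff.mp (this hx hy hxy)

lemma not_tendsto_nhds_of_eventually_le_deriv {φ : ℝ → ℝ} (hφ : Differentiable ℝ φ)
    {ε l : ℝ} (hε : 0 < ε) (hev : ∀ᶠ t in atTop, ε ≤ deriv φ t) :
    ¬ Tendsto φ atTop (𝓝 l) := by
  intro hl
  obtain ⟨T, hT⟩ := eventually_atTop.mp hev
  have hgrowth : ∀ t ≥ T, ε ≤ φ (t + 1) - φ t := fun t ht => by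
    simpa using (convex_Ici T).mul_sub_le_image_sub_of_le_deriv hφ.continuous.continuousOn
      hφ.differentiableOn (fun x hx => hT x (by rw [interior_Ici] at hx; exact hx.le))
      t ht (t + 1) (by simp only [mem_Ici]; linarith) (by linarith)
  have hstep : Tendsto (fun t => φ (t + 1) - φ t) atTop (𝓝 0) := by
    simpa using (hl.comp (tendsto_atTop_add_const_right atTop 1 tendsto_id)).sub hl
  exact absurd (ge_of_tendsto hstep (eventually_atTop.mpr ⟨T, hgrowth⟩)) (not_le.mpr hε)

lemma neg_of_strictMonoOn_of_eq_deriv_add {g φ k : ℝ → ℝ} {a l : ℝ}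
    (hg : StrictMonoOn g (Ici a)) (hφ : Differentiable ℝ φ) (hφl : Tendsto φ atTop (𝓝 l))
    (hk : Tendsto k atTop (𝓝 0)) (hgφ : ∀ t ≥ a, g t = deriv φ t + k t) :
    ∀ t ≥ a, g t < 0 := by
  intro t ht
  by_contra! hgt
  set c := g (t + 1)
  have hc : 0 < c := hgt.trans_lt (hg ht (by simp only [mem_Ici]; linarith) (by linarith))
  refine not_tendsto_nhds_of_eventually_le_deriv hφ (half_pos hc) ?_ hφl
  filter_upwards [eventually_ge_atTop (t + 1), hk.eventually (gt_mem_nhds (half_pos hc))]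
    with s hs hks
  have hcs : c ≤ g s := hg.monotoneOn (by simp only [mem_Ici]; linarith)
    (by simp only [mem_Ici]; linarith) hs
  linarith [hgφ s (by linarith)]

lemma lt_of_strictAntiOn_of_le_of_tendsto {H u : ℝ → ℝ} {a l : ℝ}
    (hH : StrictAntiOn H (Ici a)) (hu : ∀ t ≥ a, u t ≤ H t) (hul : Tendsto u atTop (𝓝 l)) :
    ∀ t ≥ a, l < H t := by
  intro t ht
  have hle : l ≤ H (t + 1) := le_of_tendsto hul <| by
    filter_upwards [eventually_ge_atTop (t + 1)] with s hs
    exact (hu s (by linarith)).trans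
      (hH.antitoneOn (by simp only [mem_Ici]; linarith) (by simp only [mem_Ici]; linarith) hs)
  exact hle.trans_lt (hH ht (by simp only [mem_Ici]; linarith) (by linarith))

lemma hasDerivAt_iteratedDeriv {𝕜 F : Type*} [NontriviallyNormedField 𝕜]
    [NormedAddCommGroup F] [NormedSpace 𝕜 F] {f : 𝕜 → F} {n : WithTop ℕ∞}
    (hf : ContDiff 𝕜 n f) {k : ℕ} (hk : (k : WithTop ℕ∞) < n) (t : 𝕜) :
    HasDerivAt (iteratedDeriv k f) (iteratedDeriv (k + 1) f t) t := by
  rw [iteratedDeriv_succ]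
  exact (hf.differentiable_iteratedDeriv k hk t).hasDerivAt

section

variable {m : ℝ} {f : ℝ → ℝ}

lemma hasDerivAt_iteratedDeriv_two_add_mul_deriv (hf : ContDiff ℝ 3 f) {t : ℝ}
    (hode : iteratedDeriv 3 f t + (m + 2) * f t * iteratedDeriv 2 f t
      - (2 * m + 1) * (deriv f t) ^ 2 = 0) :
    HasDerivAt (fun s => iteratedDeriv 2 f s + (m + 2) * (f s * deriv f s))
      (3 * (m + 1) * deriv f t ^ 2) t := by
  have h0 := hasDerivAt_iteratedDeriv hf (k := 0) (by norm_num) t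
  have h1 := hasDerivAt_iteratedDeriv hf (k := 1) (by norm_num) t
  have h2 := hasDerivAt_iteratedDeriv hf (k := 2) (by norm_num) t
  simp only [iteratedDeriv_zero, iteratedDeriv_one, zero_add] at h0 h1
  exact (h2.add ((h0.mul h1).const_mul (m + 2))).congr_deriv (by linear_combination hode)

lemma hasDerivAt_deriv_add_mul_sq (hf : ContDiff ℝ 2 f) (t : ℝ) :
    HasDerivAt (fun s => deriv f s + (m + 2) / 2 * f s ^ 2)
      (iteratedDeriv 2 f t + (m + 2) * (f t * deriv f t)) t := by
  have h0 := hasDerivAt_iteratedDeriv hf (k := 0) (by norm_num) t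
  have h1 := hasDerivAt_iteratedDeriv hf (k := 1) (by norm_num) t
  simp only [iteratedDeriv_zero, iteratedDeriv_one, zero_add] at h0 h1
  exact (h1.add ((h0.pow 2).const_mul ((m + 2) / 2))).congr_deriv (by ring)

end

theorem stmt_19_general (m : ℝ) (hm : m > -1/2)
    (f : ℝ → ℝ) (hf : ContDiff ℝ 3 f)
    (hode : ∀ t ≥ (0:ℝ), iteratedDeriv 3 f t + (m + 2) * f t * iteratedDeriv 2 f t
      - (2 * m + 1) * (deriv f t) ^ 2 = 0)
    (hlim : Filter.Tendsto (deriv f) Filter.atTop (nhds 0))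
    (t₀ : ℝ) (ht₀pos : 0 < t₀)
    (ht₀ : iteratedDeriv 2 f t₀ = 0)
    (hcvx : ∀ t, t₀ < t → 0 < iteratedDeriv 2 f t)
    (hbdd : ∃ C : ℝ, ∀ t ≥ (0:ℝ), |f t| ≤ C)
    (hpos : ∀ t ≥ t₀, 0 < f t)
    (hdec : ∀ t ≥ t₀, deriv f t < 0) :
    ∀ t ≥ t₀,
      (-(m + 2) / 2 < deriv f t / (f t) ^ 2 ∧ deriv f t / (f t) ^ 2 < 0) ∧
      (0 ≤ iteratedDeriv 2 f t / (f t) ^ 3 ∧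
        iteratedDeriv 2 f t / (f t) ^ 3 < -(m + 2) * (deriv f t / (f t) ^ 2)) := by
  have hm2 : 0 < m + 2 := by linarith
  have hdf' : Differentiable ℝ (deriv f) := by
    simpa using hf.differentiable_iteratedDeriv 1 (by norm_num)
  have hff' : Tendsto (fun t => (m + 2) * (f t * deriv f t)) atTop (𝓝 0) := by
    obtain ⟨C, hC⟩ := hbdd
    have hfC : IsBoundedUnder (· ≤ ·) atTop (fun t => ‖f t‖) :=
      isBoundedUnder_of_eventually_le (a := C) (eventually_ge_atTop 0 |>.mono hC)
    simpa [mul_comm] using (hlim.zero_mul_isBoundedUnder_le hfC).const_mul (m + 2)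
  have hg_neg : ∀ t ≥ t₀, iteratedDeriv 2 f t + (m + 2) * (f t * deriv f t) < 0 :=
    neg_of_strictMonoOn_of_eq_deriv_add
      (strictMonoOn_Ici_of_hasDerivAt_pos
        (fun t ht => hasDerivAt_iteratedDeriv_two_add_mul_deriv hf (hode t (ht₀pos.le.trans ht)))
        (fun t ht => mul_pos (by linarith) (sq_pos_of_neg (hdec t ht.le))))
      hdf' hlim hff' (fun t _ => by rw [iteratedDeriv_succ, iteratedDeriv_one])
  have hH_pos : ∀ t ≥ t₀, 0 < deriv f t + (m + 2) / 2 * f t ^ 2 :=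
    lt_of_strictAntiOn_of_le_of_tendsto
      (strictAntiOn_Ici_of_hasDerivAt_neg
        (fun t _ => hasDerivAt_deriv_add_mul_sq (hf.of_le (by norm_num)) t)
        (fun t ht => hg_neg t ht.le))
      (fun t _ => le_add_of_nonneg_right (by positivity)) hlim
  intro t ht
  have hf_pos := hpos t ht
  have hf'' : 0 ≤ iteratedDeriv 2 f t := by
    rcases ht.eq_or_lt with h | h
    · rw [← h, ht₀]
    · exact (hcvx t h).le
  refine ⟨⟨?_, div_neg_of_neg_of_pos (hdec t ht) (by positivity)⟩, by positivity, ?_⟩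
  · rw [lt_div_iff₀ (by positivity)]
    linarith [hH_pos t ht]
  · have hrhs : -(m + 2) * (deriv f t / f t ^ 2) = -(m + 2) * (f t * deriv f t) / f t ^ 3 := by
      field_simp
    rw [hrhs]
    exact div_lt_div_of_pos_right (by linarith [hg_neg t ht]) (by positivity)

theorem stmt_19 (m γ : ℝ) (hm : m > -1/2)
    (f : ℝ → ℝ) (hf : ContDiff ℝ 3 f)
    (hode : ∀ t ≥ (0:ℝ), iteratedDeriv 3 f t + (m + 2) * f t * iteratedDeriv 2 f t
      - (2 * m + 1) * (deriv f t) ^ 2 = 0)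
    (h0 : f 0 = -γ) (h2 : iteratedDeriv 2 f 0 = -1)
    (hlim : Filter.Tendsto (deriv f) Filter.atTop (nhds 0))
    (t₀ : ℝ) (ht₀pos : 0 < t₀)
    (ht₀ : iteratedDeriv 2 f t₀ = 0)
    (hccv : ∀ t, 0 ≤ t → t < t₀ → iteratedDeriv 2 f t < 0)
    (hcvx : ∀ t, t₀ < t → 0 < iteratedDeriv 2 f t)
    (hbdd : ∃ C : ℝ, ∀ t ≥ (0:ℝ), |f t| ≤ C)
    (hpos : ∀ t ≥ t₀, 0 < f t)
    (hdec : ∀ t ≥ t₀, deriv f t < 0) :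
    ∀ t ≥ t₀,
      (-(m + 2) / 2 < deriv f t / (f t) ^ 2 ∧ deriv f t / (f t) ^ 2 < 0) ∧
      (0 ≤ iteratedDeriv 2 f t / (f t) ^ 3 ∧
        iteratedDeriv 2 f t / (f t) ^ 3 < -(m + 2) * (deriv f t / (f t) ^ 2)) :=
  stmt_19_general m hm f hf hode hlim t₀ ht₀pos ht₀ hcvx hbdd hpos hdec
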